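/- Let z : ZMod (2t) → ℤ satisfy |z(k+1) - z(k)| = 1 and z(k+t) = t - z(k) for all k. Then the number of local minima of z equals t - (1/2)·∑ₖ z(k)² + (1/(4t))·∑_{k=0}^{2t-1} |ẑ(k)|²·cos²(πk/t). -/

import Mathlib

/-- Number of local minima of a `2t`-periodic integer sequence. -/
def minimaCount (t : ℕ) (z : ZMod (2*t) → ℤ) : ℕ :=
  ((Finset.range (2*t)).filter (fun k : ℕ =>
    z ((k : ZMod (2*t)) - 1) > z (k : ZMod (2*t)) ∧
    z ((k : ZMod (2*t)) + 1) > z (k : ZMod (2*t)))).card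

/-- Discrete Fourier transform of a `2t`-periodic sequence,
using the primitive `2t`-th root of unity `exp(-πi/t)`. -/
noncomputable def dft (t : ℕ) (z : ZMod (2*t) → ℂ) (k : ℕ) : ℂ :=
  ∑ j ∈ Finset.range (2*t),
    z (j : ZMod (2*t)) * Complex.exp (-(Real.pi : ℂ) * Complex.I * k * j / t)

/-!
Averaging over the two neighbours, `w j = (z (j - 1) + z (j + 1)) / 2`, is the Fourier multiplier
`cos (π k / t)`, so by Plancherel the cosine-weighted Fourier sum is `(1 / 2) ∑ w j ^ 2`.
For a sequence with steps `±1`, `(z (j - 1) + z (j + 1)) ^ 2 - 4 z j ^ 2` is `8` at a local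
minimum plus a term whose sum telescopes to `-4` per step, so `∑ w j ^ 2 - ∑ z j ^ 2` is
`2 · #minima - 2t`.
-/

open Finset
open scoped ZMod Real

namespace ZMod

variable {N : ℕ} [NeZero N]

theorem sum_range_natCast {M : Type*} [AddCommMonoid M] (f : ZMod N → M) :
    ∑ k ∈ range N, f k = ∑ x : ZMod N, f x := by
  refine sum_nbij' (↑) ZMod.val (fun _ _ ↦ mem_univ _) (fun x _ ↦ mem_range.2 x.val_lt)
    (fun _ hk ↦ val_natCast_of_lt (mem_range.1 hk)) (fun x _ ↦ natCast_zmod_val x) fun _ _ ↦ rfl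

theorem dft_comp_add_const {E : Type*} [AddCommGroup E] [Module ℂ E] (Φ : ZMod N → E)
    (a k : ZMod N) : 𝓕 (fun j ↦ Φ (j + a)) k = stdAddChar (a * k) • 𝓕 Φ k := by
  simp only [dft_apply, smul_sum, smul_smul, ← AddChar.map_add_eq_mul]
  conv_rhs => rw [← Equiv.sum_comp (Equiv.addRight a)]
  exact sum_congr rfl fun j _ ↦ by rw [Equiv.coe_addRight]; ring_nf

theorem stdAddChar_add_stdAddChar_neg (k : ℤ) :
    stdAddChar (k : ZMod N) + stdAddChar (-k : ZMod N) = 2 * Real.cos (2 * π * k / N) := by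
  rw [← Int.cast_neg, stdAddChar_coe, stdAddChar_coe, Complex.ofReal_cos, Complex.two_cos]
  push_cast
  ring_nf

theorem sum_sq_norm_dft (Φ : ZMod N → ℂ) : ∑ k, ‖𝓕 Φ k‖ ^ 2 = N * ∑ j, ‖Φ j‖ ^ 2 := by
  have hchar (d : ZMod N) : ∑ k, stdAddChar (k * d) = if d = 0 then (N : ℂ) else 0 := by
    simpa using AddChar.sum_mulShift d (isPrimitive_stdAddChar N)
  have hexpand (k : ZMod N) : 𝓕 Φ k * starRingEnd ℂ (𝓕 Φ k) =
      ∑ j, ∑ l, Φ j * starRingEnd ℂ (Φ l) * stdAddChar (k * (l - j)) := by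
    simp only [dft_apply, smul_eq_mul, map_sum, map_mul, ← AddChar.map_neg_eq_conj, sum_mul_sum]
    refine sum_congr rfl fun j _ ↦ sum_congr rfl fun l _ ↦ ?_
    rw [mul_sub, sub_eq_neg_add, AddChar.map_add_eq_mul]
    ring_nf
  apply Complex.ofReal_injective
  push_cast
  calc ∑ k, (‖𝓕 Φ k‖ : ℂ) ^ 2 = ∑ k, 𝓕 Φ k * starRingEnd ℂ (𝓕 Φ k) := by
        simp only [Complex.mul_conj']
    _ = ∑ j, ∑ l, Φ j * starRingEnd ℂ (Φ l) * ∑ k, stdAddChar (k * (l - j)) := by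
        simp only [hexpand, mul_sum]
        rw [sum_comm]; exact sum_congr rfl fun _ _ ↦ sum_comm
    _ = N * ∑ j, (‖Φ j‖ : ℂ) ^ 2 := by
        simp only [hchar, sub_eq_zero, mul_ite, mul_zero, sum_ite_eq', mem_univ, if_true,
          Complex.mul_conj', mul_sum]
        exact sum_congr rfl fun _ _ ↦ mul_comm _ _

end ZMod

noncomputable def neighbourAverage {N : ℕ} (Φ : ZMod N → ℂ) (j : ZMod N) : ℂ :=
  (Φ (j - 1) + Φ (j + 1)) / 2

theorem dft_neighbourAverage {N : ℕ} [NeZero N] (Φ : ZMod N → ℂ) (k : ℤ) :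
    𝓕 (neighbourAverage Φ) k = Real.cos (2 * π * k / N) * 𝓕 Φ k := by
  have hsplit : neighbourAverage Φ = (1 / 2 : ℂ) • ((fun j ↦ Φ (j + -1)) + fun j ↦ Φ (j + 1)) := by
    ext j
    simp only [neighbourAverage, sub_eq_add_neg, Pi.smul_apply, Pi.add_apply, smul_eq_mul]
    ring
  rw [hsplit, _root_.map_smul, map_add, Pi.smul_apply, Pi.add_apply, ZMod.dft_comp_add_const,
    ZMod.dft_comp_add_const, smul_eq_mul, smul_eq_mul, smul_eq_mul, ← add_mul, neg_one_mul, one_mul,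
    add_comm, ZMod.stdAddChar_add_stdAddChar_neg]
  ring

theorem dft_eq_zmod_dft (t : ℕ) [NeZero (2 * t)] (Φ : ZMod (2 * t) → ℂ) (k : ℕ) :
    dft t Φ k = 𝓕 Φ k := by
  rw [dft, ZMod.dft_apply, ← ZMod.sum_range_natCast]
  refine sum_congr rfl fun j _ ↦ ?_
  have harg : -((j : ZMod (2 * t)) * k) = ((-(j * k : ℤ) : ℤ) : ZMod (2 * t)) := by push_cast; rfl
  rw [harg, ZMod.stdAddChar_coe, smul_eq_mul, mul_comm]
  push_cast
  ring_nf

theorem norm_dft_sq_mul_cos_sq (t : ℕ) [NeZero (2 * t)] (Φ : ZMod (2 * t) → ℂ) (k : ℕ) :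
    ‖dft t Φ k‖ ^ 2 * Real.cos (π * k / t) ^ 2 = ‖𝓕 (neighbourAverage Φ) k‖ ^ 2 := by
  have hangle : 2 * π * ((k : ℤ) : ℝ) / ((2 * t : ℕ) : ℝ) = π * k / t := by
    push_cast
    field_simp
  have h := dft_neighbourAverage Φ k
  rw [Int.cast_natCast, hangle] at h
  rw [dft_eq_zmod_dft, h, norm_mul, Complex.norm_real, Real.norm_eq_abs, mul_pow, sq_abs, mul_comm]

theorem norm_neighbourAverage_intCast_sq {N : ℕ} (z : ZMod N → ℤ) (x : ZMod N) :
    ‖neighbourAverage (fun j ↦ (z j : ℂ)) x‖ ^ 2 = ((z (x - 1) + z (x + 1) : ℤ) : ℝ) ^ 2 / 4 := by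
  have hreal : neighbourAverage (fun j ↦ (z j : ℂ)) x =
      (((z (x - 1) + z (x + 1) : ℤ) : ℝ) / 2 : ℝ) := by
    simp [neighbourAverage]
  rw [hreal, Complex.norm_real, Real.norm_eq_abs, sq_abs]
  ring

-- With `a = c - p`, `b = c + q` and `p, q = ±1`: `(q - p) ^ 2 = 8 · [p = -1 ∧ q = 1] - 2 (q - p)`.
theorem sq_add_sub_four_mul_sq_of_abs_sub_eq_one {a b c : ℤ} (ha : |c - a| = 1) (hb : |b - c| = 1) :
    (a + b) ^ 2 - 4 * c ^ 2 =
      8 * (if a > c ∧ b > c then 1 else 0) + (4 * c - 2) * ((b - c) - (c - a)) := by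
  obtain ⟨p, rfl⟩ : ∃ p, a = c - p := ⟨c - a, by ring⟩
  obtain ⟨q, rfl⟩ : ∃ q, b = c + q := ⟨b - c, by ring⟩
  rw [sub_sub_cancel] at ha
  rw [add_sub_cancel_left] at hb
  rcases (abs_eq zero_le_one).1 ha with rfl | rfl <;>
    rcases (abs_eq zero_le_one).1 hb with rfl | rfl <;> split_ifs <;> first | omega | ring

theorem sum_sq_add_neighbours_sub_four_mul_sq {n : ℕ} [NeZero n] (z : ZMod n → ℤ)
    (hstep : ∀ k, |z (k + 1) - z k| = 1) :
    ∑ x, ((z (x - 1) + z (x + 1)) ^ 2 - 4 * z x ^ 2) =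
      8 * #{x | z (x - 1) > z x ∧ z (x + 1) > z x} - 4 * (n : ℤ) := by
  have hpoint (x : ZMod n) := sq_add_sub_four_mul_sq_of_abs_sub_eq_one
    (by simpa using hstep (x - 1)) (hstep x)
  have hshift : ∑ x, (4 * z x - 2) * (z x - z (x - 1)) =
      ∑ x, (4 * z (x + 1) - 2) * (z (x + 1) - z x) := by
    simpa using (Equiv.sum_comp (Equiv.addRight 1) fun x ↦ (4 * z x - 2) * (z x - z (x - 1))).symm
  have htelescope : ∑ x, (4 * z x - 2) * ((z (x + 1) - z x) - (z x - z (x - 1))) = -4 * n := by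
    calc _ = ∑ x, (4 * z x - 2) * (z (x + 1) - z x) - ∑ x, (4 * z x - 2) * (z x - z (x - 1)) := by
          rw [← sum_sub_distrib]; exact sum_congr rfl fun x _ ↦ mul_sub _ _ _
      _ = ∑ x, -4 * |z (x + 1) - z x| ^ 2 := by
          rw [hshift, ← sum_sub_distrib]
          exact sum_congr rfl fun x _ ↦ by rw [sq_abs]; ring
      _ = -4 * n := by simp [hstep, mul_comm]
  rw [sum_congr rfl fun x _ ↦ hpoint x, sum_add_distrib, ← mul_sum, sum_boole, htelescope]
  ring

theorem minimaCount_eq_card (t : ℕ) [NeZero (2 * t)] (z : ZMod (2 * t) → ℤ) :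
    minimaCount t z = #{x : ZMod (2 * t) | z (x - 1) > z x ∧ z (x + 1) > z x} := by
  rw [minimaCount, card_filter, card_filter]
  exact ZMod.sum_range_natCast fun x ↦ if z (x - 1) > z x ∧ z (x + 1) > z x then 1 else 0

theorem minima_eq_cos_formula_general (t : ℕ) (ht : 2 ≤ t) (z : ZMod (2*t) → ℤ)
    (hstep : ∀ k : ZMod (2*t), |z (k + 1) - z k| = 1) :
    (minimaCount t z : ℝ) =
      (t : ℝ) - (1/2) * (∑ k ∈ Finset.range (2*t), (z (k : ZMod (2*t)) : ℝ)^2)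
        + (1/(4*(t:ℝ))) * ∑ k ∈ Finset.range (2*t),
          (‖dft t (fun j => (z j : ℂ)) k‖)^2 * (Real.cos (Real.pi * k / t))^2 := by
  have : NeZero (2 * t) := ⟨by omega⟩
  have hsum : ∑ x, ((z (x - 1) + z (x + 1) : ℤ) : ℝ) ^ 2 = 4 * ∑ x, (z x : ℝ) ^ 2
      + 8 * #{x : ZMod (2 * t) | z (x - 1) > z x ∧ z (x + 1) > z x} - 8 * t := by
    have h := congrArg (Int.cast : ℤ → ℝ) (sum_sq_add_neighbours_sub_four_mul_sq z hstep)
    push_cast at h ⊢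
    rw [sum_sub_distrib, ← mul_sum] at h
    linarith
  rw [minimaCount_eq_card, sum_congr rfl fun k _ ↦ norm_dft_sq_mul_cos_sq t _ k,
    ZMod.sum_range_natCast fun x ↦ ‖𝓕 (neighbourAverage fun j ↦ (z j : ℂ)) x‖ ^ 2,
    ZMod.sum_range_natCast fun x ↦ (z x : ℝ) ^ 2, ZMod.sum_sq_norm_dft]
  simp only [norm_neighbourAverage_intCast_sq]
  rw [← sum_div, hsum]
  push_cast
  field_simp
  ring

theorem minima_eq_cos_formula (t : ℕ) (ht : 2 ≤ t) (z : ZMod (2*t) → ℤ)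
    (hstep : ∀ k : ZMod (2*t), |z (k + 1) - z k| = 1)
    (hant : ∀ k : ZMod (2*t), z (k + (t : ZMod (2*t))) = (t : ℤ) - z k) :
    (minimaCount t z : ℝ) =
      (t : ℝ) - (1/2) * (∑ k ∈ Finset.range (2*t), (z (k : ZMod (2*t)) : ℝ)^2)
        + (1/(4*(t:ℝ))) * ∑ k ∈ Finset.range (2*t),
          (‖dft t (fun j => (z j : ℂ)) k‖)^2 * (Real.cos (Real.pi * k / t))^2 :=
  minima_eq_cos_formula_general t ht z hstep
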